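/- Let (i,j) with i ≠ j and let j = i_0, i_1, …, i_P = i be a path with k_{i_p i_{p−1}} > 0 for p = 1,…,P in which no ordered edge is repeated, and set μ := min_{1 ≤ p ≤ P} k_{i_p i_{p−1}} η_{i_{p−1}}. Then for every U = (U_1,…,U_N) with U_i ∈ L²(ℝ^d, M_i), one has −⟨LU,U⟩ ≥ (μ/(2P)) ∫∫ (U_i(v) − U_j(v'))² dM_j(v') dM_i(v). -/

import Mathlib

open Finset MeasureTheory ProbabilityTheory

/-!
Write `D(m, n) = ∫∫ (U_m(v) - U_n(w))² = Var_m + Var_n + (E_m - E_n)²`, where `E_m`, `Var_m`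
are the mean and variance of `U_m` under `M_m`. The balance condition on `η` turns `-⟨LU,U⟩`
into `½ ∑_{m,n} k_{mn} η_n D(m, n)`, a sum of nonnegative terms. A path without repeated
ordered edges picks out `P` distinct terms of it, each at least `μ D(i_p, i_{p-1})`. Finally
`D(i, j) ≤ P ∑_p D(i_p, i_{p-1})`: the endpoint variances occur in the path sum, and the mean
differences telescope, so Cauchy–Schwarz bounds `(E_i - E_j)²`.
-/

section Moments

variable {α β : Type*} [MeasurableSpace α] [MeasurableSpace β]
  {μ : Measure α} {ν : Measure β} [IsProbabilityMeasure μ] [IsProbabilityMeasure ν]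
  {f : α → ℝ} {g : β → ℝ}

lemma sq_integral_le_integral_sq (hf : MemLp f 2 μ) :
    (∫ x, f x ∂μ) ^ 2 ≤ ∫ x, f x ^ 2 ∂μ := by
  have := variance_eq_sub hf ▸ variance_nonneg f μ
  simpa only [Pi.pow_apply, sub_nonneg] using this

lemma integral_const_sub_sq (hf : MemLp f 2 μ) (r : ℝ) :
    ∫ x, (r - f x) ^ 2 ∂μ = r ^ 2 - 2 * r * ∫ x, f x ∂μ + ∫ x, f x ^ 2 ∂μ := by
  have hf1 : Integrable f μ := hf.integrable one_le_two
  have hexpand : (fun x => (r - f x) ^ 2) = fun x => (r ^ 2 - 2 * r * f x) + f x ^ 2 := by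
    ext; ring
  have hlin : Integrable (fun x => r ^ 2 - 2 * r * f x) μ :=
    (integrable_const _).sub (hf1.const_mul _)
  rw [hexpand, integral_add hlin hf.integrable_sq,
    integral_sub (integrable_const _) (hf1.const_mul _), integral_const, integral_const_mul]
  simp

lemma integral_integral_sub_sq (hf : MemLp f 2 μ) (hg : MemLp g 2 ν) :
    ∫ v, ∫ w, (f v - g w) ^ 2 ∂ν ∂μ
      = ∫ v, f v ^ 2 ∂μ + ∫ w, g w ^ 2 ∂ν - 2 * ((∫ v, f v ∂μ) * ∫ w, g w ∂ν) := by
  have hf1 : Integrable f μ := hf.integrable one_le_two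
  have hexpand : (fun v => ∫ w, (f v - g w) ^ 2 ∂ν) =
      fun v => (f v ^ 2 - (2 * ∫ w, g w ∂ν) * f v) + ∫ w, g w ^ 2 ∂ν := by
    ext v; rw [integral_const_sub_sq hg]; ring
  have hquad : Integrable (fun v => f v ^ 2 - (2 * ∫ w, g w ∂ν) * f v) μ :=
    hf.integrable_sq.sub (hf1.const_mul _)
  rw [hexpand, integral_add hquad (integrable_const _),
    integral_sub hf.integrable_sq (hf1.const_mul _), integral_const, integral_const_mul]
  simp only [probReal_univ, one_smul]
  ring

end Moments

lemma sq_sub_le_mul_sum_sq_sub (t : ℕ → ℝ) (P : ℕ) :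
    (t P - t 0) ^ 2 ≤ P * ∑ q ∈ range P, (t (q + 1) - t q) ^ 2 := by
  have h := sq_sum_le_card_mul_sum_sq (s := range P) (f := fun q => t (q + 1) - t q)
  rwa [sum_range_sub, card_range] at h

lemma add_sub_mul_le_mul_sum {s t : ℕ → ℝ} (hst : ∀ q, t q ^ 2 ≤ s q) {P : ℕ} (hP : 1 ≤ P) :
    s P + s 0 - 2 * (t P * t 0)
      ≤ P * ∑ q ∈ range P, (s (q + 1) + s q - 2 * (t (q + 1) * t q)) := by
  set a := fun q => s q - t q ^ 2
  have ha : ∀ q, 0 ≤ a q := fun q => sub_nonneg.mpr (hst q)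
  have hsplit : ∀ m n, s m + s n - 2 * (t m * t n) = a m + a n + (t m - t n) ^ 2 := by
    intro m n; simp only [a]; ring
  have hlast : a P ≤ ∑ q ∈ range P, a (q + 1) := by
    obtain ⟨P', rfl⟩ := Nat.exists_eq_add_of_le' hP
    exact single_le_sum (f := fun q => a (q + 1)) (fun q _ => ha _) (self_mem_range_succ P')
  have hfirst : a 0 ≤ ∑ q ∈ range P, a q :=
    single_le_sum (fun q _ => ha q) (mem_range.mpr hP)
  have hends : a P + a 0 ≤ P * (∑ q ∈ range P, a (q + 1) + ∑ q ∈ range P, a q) := by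
    have hPone : (1 : ℝ) ≤ P := by exact_mod_cast hP
    calc a P + a 0 ≤ ∑ q ∈ range P, a (q + 1) + ∑ q ∈ range P, a q := add_le_add hlast hfirst
      _ ≤ _ := le_mul_of_one_le_left
          (add_nonneg (sum_nonneg fun q _ => ha _) (sum_nonneg fun q _ => ha q)) hPone
  simp_rw [hsplit, sum_add_distrib]
  linarith [sq_sub_le_mul_sum_sq_sub t P]

section ReactionNetwork

variable {ι : Type*} [Fintype ι]

lemma sum_range_le_sum_sum_of_injOn {F : ι → ι → ℝ} (hF : ∀ m n, 0 ≤ F m n) {c : ℕ → ι}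
    {P : ℕ} (hc : Set.InjOn (fun q => (c (q + 1), c q)) (range P)) :
    ∑ q ∈ range P, F (c (q + 1)) (c q) ≤ ∑ m, ∑ n, F m n := by
  classical
  rw [← sum_image (f := fun e : ι × ι => F e.1 e.2) hc, ← Fintype.sum_prod_type']
  exact sum_le_univ_sum_of_nonneg fun e => hF _ _

lemma two_mul_neg_reactionForm_eq {k : ι → ι → ℝ} {η : ι → ℝ}
    (hbal : ∀ m, ∑ n, (k m n * η n - k n m * η m) = 0) (s t : ι → ℝ) :
    2 * -((∑ m, ∑ n, k m n * η n * (t n * t m)) - ∑ m, ∑ n, k n m * η m * s m)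
      = ∑ m, ∑ n, k m n * η n * (s m + s n - 2 * (t m * t n)) := by
  have hgain : ∑ m, ∑ n, k m n * η n * s m = ∑ m, ∑ n, k n m * η m * s m := by
    refine sum_congr rfl fun m _ => ?_
    rw [← sum_mul, ← sum_mul, ← sub_eq_zero, ← sub_mul, ← sum_sub_distrib, hbal m, zero_mul]
  have hswap : ∑ m, ∑ n, k m n * η n * s n = ∑ m, ∑ n, k n m * η m * s m := sum_comm
  have hexpand : ∀ m n, k m n * η n * (s m + s n - 2 * (t m * t n))
      = k m n * η n * s m + k m n * η n * s n - 2 * (k m n * η n * (t n * t m)) := by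
    intro m n; ring
  simp_rw [hexpand, sum_sub_distrib, sum_add_distrib, ← mul_sum, hgain, hswap]
  ring

lemma neg_reactionForm_ge_of_path {k : ι → ι → ℝ} (hk : ∀ m n, 0 ≤ k m n) {η : ι → ℝ}
    (hη : ∀ m, 0 ≤ η m) (hbal : ∀ m, ∑ n, (k m n * η n - k n m * η m) = 0)
    {s t : ι → ℝ} (hst : ∀ m, t m ^ 2 ≤ s m) {c : ℕ → ι} {P : ℕ} (hP : 1 ≤ P)
    (hc : Set.InjOn (fun q => (c (q + 1), c q)) (range P)) {μ : ℝ} (hμ : 0 ≤ μ)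
    (hμle : ∀ q ∈ range P, μ ≤ k (c (q + 1)) (c q) * η (c q)) :
    -((∑ m, ∑ n, k m n * η n * (t n * t m)) - ∑ m, ∑ n, k n m * η m * s m)
      ≥ μ / (2 * P) * (s (c P) + s (c 0) - 2 * (t (c P) * t (c 0))) := by
  set D := fun m n => s m + s n - 2 * (t m * t n)
  have hD : ∀ m n, 0 ≤ D m n := fun m n => by
    nlinarith [hst m, hst n, sq_nonneg (t m - t n)]
  have hP₀ : (0 : ℝ) < P := by exact_mod_cast hP
  have hedge : ∀ q ∈ range P, μ * D (c (q + 1)) (c q)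
      ≤ k (c (q + 1)) (c q) * η (c q) * D (c (q + 1)) (c q) :=
    fun q hq => mul_le_mul_of_nonneg_right (hμle q hq) (hD _ _)
  have hpath := sum_range_le_sum_sum_of_injOn
    (fun m n => mul_nonneg (mul_nonneg (hk m n) (hη n)) (hD m n)) hc
  rw [ge_iff_le, ← mul_le_mul_iff_right₀ (zero_lt_two' ℝ), two_mul_neg_reactionForm_eq hbal]
  calc 2 * (μ / (2 * P) * D (c P) (c 0))
      ≤ 2 * (μ / (2 * P) * (P * ∑ q ∈ range P, D (c (q + 1)) (c q))) := by
        gcongr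
        exact add_sub_mul_le_mul_sum (s := s ∘ c) (t := t ∘ c) (fun q => hst (c q)) hP
    _ = ∑ q ∈ range P, μ * D (c (q + 1)) (c q) := by
        rw [← mul_sum]; field_simp
    _ ≤ ∑ q ∈ range P, k (c (q + 1)) (c q) * η (c q) * D (c (q + 1)) (c q) := sum_le_sum hedge
    _ ≤ _ := hpath

end ReactionNetwork

theorem statement10_general
    (N d : ℕ)
    (k : Fin N → Fin N → ℝ) (hk : ∀ i j, 0 ≤ k i j)
    (η : Fin N → ℝ) (hηpos : ∀ i, 0 < η i)
    (hηbal : ∀ i, ∑ j, (k i j * η j - k j i * η i) = 0)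
    (i j : Fin N)
    (P : ℕ) (c : ℕ → Fin N)
    (hP : 1 ≤ P)
    (hc0 : c 0 = j) (hcP : c P = i)
    (hnorep : ∀ p q, 1 ≤ p → p ≤ P → 1 ≤ q → q ≤ P → p ≠ q →
      (c (p - 1), c p) ≠ (c (q - 1), c q))
    (μ : ℝ)
    (hμ : IsLeast
      {x : ℝ | ∃ p, 1 ≤ p ∧ p ≤ P ∧ x = k (c p) (c (p - 1)) * η (c (p - 1))} μ)
    (M : Fin N → Measure (Fin d → ℝ))
    (hM : ∀ m, IsProbabilityMeasure (M m))
    (U : Fin N → (Fin d → ℝ) → ℝ)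
    (hU : ∀ m, MemLp (U m) 2 (M m)) :
    -((∑ m, ∑ n, k m n * η n * ∫ v, ∫ w, U n w * U m v ∂(M n) ∂(M m))
        - ∑ m, ∑ n, k n m * η m * ∫ v, (U m v) ^ 2 ∂(M m))
      ≥ (μ / (2 * P)) * ∫ v, ∫ w, (U i v - U j w) ^ 2 ∂(M j) ∂(M i) := by
  subst hc0 hcP
  have hinj : Set.InjOn (fun q => (c (q + 1), c q)) (range P) := by
    intro q hq r hr hqr
    by_contra hne
    simp only [coe_range, Set.mem_Iio] at hq hr
    obtain ⟨hsucc, hself⟩ := Prod.mk.inj hqr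
    exact hnorep (q + 1) (r + 1) (by omega) hq (by omega) hr (by omega) (by simp [hsucc, hself])
  have hμ₀ : 0 ≤ μ := by
    obtain ⟨p, -, -, rfl⟩ := hμ.1
    exact mul_nonneg (hk _ _) (hηpos _).le
  have hμle : ∀ q ∈ range P, μ ≤ k (c (q + 1)) (c q) * η (c q) :=
    fun q hq => hμ.2 ⟨q + 1, by omega, mem_range.mp hq, by simp⟩
  simp_rw [integral_mul_const, integral_const_mul, integral_integral_sub_sq (hU _) (hU _)]
  exact neg_reactionForm_ge_of_path hk (fun m => (hηpos m).le) hηbal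
    (fun m => sq_integral_le_integral_sq (hU m)) hP hinj hμ₀ hμle

/-- Single-path species-velocity estimate: if `j = i_0, …, i_P = i` is a path with positive
rates and no repeated ordered edge, and `μ = min_p k_{i_p i_{p−1}} η_{i_{p−1}}`, then
`−⟨LU,U⟩ ≥ (μ/(2P)) ∫∫ (U_i(v) − U_j(v'))² dM_j(v') dM_i(v)`. -/
theorem statement10
    (N d : ℕ) (hN : 2 ≤ N) (hd : 1 ≤ d)
    (k : Fin N → Fin N → ℝ) (hk : ∀ i j, 0 ≤ k i j)
    (η : Fin N → ℝ) (hηpos : ∀ i, 0 < η i) (hηsum : ∑ i, η i = 1)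
    (hηbal : ∀ i, ∑ j, (k i j * η j - k j i * η i) = 0)
    (i j : Fin N) (hij : i ≠ j)
    (P : ℕ) (c : ℕ → Fin N)
    (hP : 1 ≤ P)
    (hc0 : c 0 = j) (hcP : c P = i)
    (hcpos : ∀ p, 1 ≤ p → p ≤ P → 0 < k (c p) (c (p - 1)))
    (hnorep : ∀ p q, 1 ≤ p → p ≤ P → 1 ≤ q → q ≤ P → p ≠ q →
      (c (p - 1), c p) ≠ (c (q - 1), c q))
    (μ : ℝ)
    (hμ : IsLeast
      {x : ℝ | ∃ p, 1 ≤ p ∧ p ≤ P ∧ x = k (c p) (c (p - 1)) * η (c (p - 1))} μ)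
    (M : Fin N → Measure (Fin d → ℝ))
    (hM : ∀ m, IsProbabilityMeasure (M m))
    (U : Fin N → (Fin d → ℝ) → ℝ)
    (hU : ∀ m, MemLp (U m) 2 (M m)) :
    -((∑ m, ∑ n, k m n * η n * ∫ v, ∫ w, U n w * U m v ∂(M n) ∂(M m))
        - ∑ m, ∑ n, k n m * η m * ∫ v, (U m v) ^ 2 ∂(M m))
      ≥ (μ / (2 * P)) * ∫ v, ∫ w, (U i v - U j w) ^ 2 ∂(M j) ∂(M i) :=
  statement10_general N d k hk η hηpos hηbal i j P c hP hc0 hcP hnorep μ hμ M hM U hU
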